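/- arXiv:2311.06148 — 3 statements merged into one kernel-verified Lean document; each statement's English description precedes it below -/
import Mathlib

section
/- Let Λ be an Artin algebra and C a subcategory of mod Λ with Φ-dim(C) = n < ∞. If fin.dim(add Ω^t C) < ∞ for some t ≥ n, then Ψ-dim(C) < ∞; moreover Ψ-dim(C) ≤ fin.dim(add Ω^t C) + t. -/
open scoped Classical

/-- An abstract model of the category `mod Λ` of finitely generated left modules over
an Artin algebra `Λ`, presented through the Krull–Schmidt theorem: a finitely
generated module is (the isomorphism class of) a finite multiset of indecomposable
modules.  The data records which indecomposables are projective, and the multiset of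
indecomposable direct summands of the syzygy of each indecomposable (the kernel of a
projective cover). -/
structure ModData where
  /-- iso classes of indecomposable finitely generated modules -/
  Idec : Type
  /-- which indecomposables are projective -/
  proj : Idec → Prop
  /-- the syzygy of an indecomposable -/
  syz : Idec → Multiset Idec

namespace ModData

variable (Λ : ModData)

/-- finitely generated `Λ`-modules (multisets of indecomposables) -/
abbrev Mod := Multiset Λ.Idec

/-- the syzygy operator `Ω` (extended additively) -/
def Ω (X : Λ.Mod) : Λ.Mod := X.bind Λ.syz

/-- `X` is a projective module -/
def IsProj (X : Λ.Mod) : Prop := ∀ i ∈ X, Λ.proj i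

/-- the projective dimension `pd X ∈ ℕ∞`: the least `m` with `Ω^[m] X` projective
(and `⊤` if there is no such `m`) -/
noncomputable def pd (X : Λ.Mod) : ℕ∞ :=
  sInf ((fun m : ℕ => (m : ℕ∞)) '' {m : ℕ | Λ.IsProj (Λ.Ω^[m] X)})

/-- the free abelian group `K` on the iso classes of indecomposable non-projective
finitely generated modules -/
abbrev K := FreeAbelianGroup {i : Λ.Idec // ¬ Λ.proj i}

/-- the class `[X]` of an indecomposable in `K` (projectives are sent to `0`) -/
noncomputable def cls (i : Λ.Idec) : Λ.K :=
  if h : Λ.proj i then 0 else FreeAbelianGroup.of ⟨i, h⟩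

/-- the class `[X] ∈ K` of a module `X` -/
noncomputable def clsM (X : Λ.Mod) : Λ.K := (X.map Λ.cls).sum

/-- the endomorphism `L` of `K` with `L [X] = [Ω X]` -/
noncomputable def L : Λ.K →+ Λ.K :=
  FreeAbelianGroup.lift fun i => Λ.clsM (Λ.syz i.1)

/-- `⟨X⟩` : the subgroup of `K` generated by the classes of the indecomposable
non-projective direct summands of `X` -/
def gen (X : Λ.Mod) : AddSubgroup Λ.K :=
  AddSubgroup.closure (Λ.cls '' {i | i ∈ X})

/-- the rank of a subgroup of `K` -/
noncomputable def rk (H : AddSubgroup Λ.K) : Cardinal :=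
  Module.rank ℤ (AddSubgroup.toIntSubmodule H)

/-- the iterated image `L^k H` of a subgroup of `K` -/
noncomputable def Lpow (k : ℕ) (H : AddSubgroup Λ.K) : AddSubgroup Λ.K :=
  (fun H' => AddSubgroup.map Λ.L H')^[k] H

/-- the (first) Igusa–Todorov function
`Φ(X) = min {n | rk L^k⟨X⟩ = rk L^(k+1)⟨X⟩ for all k ≥ n}` -/
noncomputable def Phi (X : Λ.Mod) : ℕ :=
  sInf {n : ℕ | ∀ k, n ≤ k →
    Λ.rk (Λ.Lpow k (Λ.gen X)) = Λ.rk (Λ.Lpow (k + 1) (Λ.gen X))}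

/-- `add C` : the closure of a class of modules under finite direct sums and
direct summands -/
def addCl (C : Set Λ.Mod) : Set Λ.Mod :=
  {X | ∃ Y ∈ AddSubmonoid.closure C, X ≤ Y}

/-- `C ⊕ D` : the class of direct sums of a module of `C` and a module of `D` -/
def oplus (C D : Set Λ.Mod) : Set Λ.Mod :=
  {X | ∃ Y ∈ C, ∃ Z ∈ D, X = Y + Z}

/-- the finitistic dimension of a class:
`fin.dim C = sup {pd X | X ∈ C, pd X < ∞}` -/
noncomputable def findim (C : Set Λ.Mod) : ℕ∞ :=
  sSup (Λ.pd '' {X | X ∈ C ∧ Λ.pd X ≠ ⊤})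

/-- the (second) Igusa–Todorov function
`Ψ(X) = Φ(X) + fin.dim (add Ω^(Φ X) X)` -/
noncomputable def Psi (X : Λ.Mod) : ℕ∞ :=
  (Λ.Phi X : ℕ∞) + Λ.findim (Λ.addCl {Λ.Ω^[Λ.Phi X] X})

/-- the `Φ`-dimension of a class -/
noncomputable def PhiDim (C : Set Λ.Mod) : ℕ∞ := ⨆ X ∈ C, (Λ.Phi X : ℕ∞)

/-- the `Ψ`-dimension of a class -/
noncomputable def PsiDim (C : Set Λ.Mod) : ℕ∞ := ⨆ X ∈ C, Λ.Psi X

/-- `C` is an `(n,t,V,D)`-GLIT class, relative to the relation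
`ses X₁ X₀ Z` ↔ "there is a short exact sequence `0 → X₁ → X₀ → Z → 0`":
`D` is additively closed, `t`-syzygy invariant with `Φ`-dim`(D) < ∞`, and every
`C ∈ 𝒞` admits a s.e.s. `0 → V₁ ⊕ D₁ → V₀ ⊕ D₀ → Ω^n C → 0` with `Vᵢ ∈ add V`,
`Dᵢ ∈ D`. -/
def IsGLIT (ses : Λ.Mod → Λ.Mod → Λ.Mod → Prop) (C : Set Λ.Mod)
    (n t : ℕ) (V : Λ.Mod) (D : Set Λ.Mod) : Prop :=
  1 ≤ t ∧ Λ.addCl D = D ∧ (∀ X ∈ D, Λ.Ω^[t] X ∈ D) ∧ Λ.PhiDim D ≠ ⊤ ∧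
    ∀ X ∈ C, ∃ V₁ ∈ Λ.addCl {V}, ∃ V₀ ∈ Λ.addCl {V}, ∃ D₁ ∈ D, ∃ D₀ ∈ D,
      ses (V₁ + D₁) (V₀ + D₀) (Λ.Ω^[n] X)

/-- the subgroup of `K` generated by the classes of the summands of modules of `D` -/
noncomputable def relSub (D : Set Λ.Mod) : AddSubgroup Λ.K :=
  AddSubgroup.closure (Λ.cls '' {i | ∃ X ∈ D, i ∈ X})

/-- the rank of (the image of) a subgroup of `K` in the quotient of `K` by the
classes of modules of `D` -/
noncomputable def rkRel (D : Set Λ.Mod) (H : AddSubgroup Λ.K) : Cardinal :=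
  Module.rank ℤ
    ((AddSubgroup.toIntSubmodule H).map (AddSubgroup.toIntSubmodule (Λ.relSub D)).mkQ)

/-- the generalized Igusa–Todorov function `Φ_{[D]}` relative to a class `D`:
defined as `Φ`, but with ranks computed in the quotient of `K` by the subgroup
generated by the classes of modules in `D` (and of projectives) -/
noncomputable def PhiRel (D : Set Λ.Mod) (X : Λ.Mod) : ℕ :=
  sInf {n : ℕ | ∀ k, n ≤ k →
    Λ.rkRel D (Λ.Lpow k (Λ.gen X)) = Λ.rkRel D (Λ.Lpow (k + 1) (Λ.gen X))}

end ModData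

/-!
For `X ∈ C` we have `Φ(X) ≤ n ≤ t`. If `Y ∈ add Ω^{Φ(X)} X` has finite projective dimension,
then `Ω^{t - Φ(X)} Y ∈ add Ω^t X ⊆ add Ω^t C`, and since `pd Y ≤ pd Ω^k Y + k` we get
`pd Y ≤ fin.dim (add Ω^t C) + (t - Φ(X))`, i.e. `Ψ(X) ≤ fin.dim (add Ω^t C) + t`.
-/

namespace ModData

variable (Λ : ModData)

def ΩHom : AddMonoid.End Λ.Mod where
  toFun := Λ.Ω
  map_zero' := Multiset.zero_bind _
  map_add' X Y := Multiset.add_bind X Y _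

lemma coe_ΩHom_pow (k : ℕ) : ⇑(Λ.ΩHom ^ k) = Λ.Ω^[k] :=
  AddMonoid.End.coe_pow _ _ _

variable {Λ}

lemma iterate_Ω_mono (k : ℕ) {X Y : Λ.Mod} (h : X ≤ Y) : Λ.Ω^[k] X ≤ Λ.Ω^[k] Y := by
  obtain ⟨W, rfl⟩ := Multiset.le_iff_exists_add.mp h
  rw [← Λ.coe_ΩHom_pow, map_add]
  exact le_add_right le_rfl

lemma iterate_Ω_mem_addCl (k : ℕ) {S : Set Λ.Mod} {Y : Λ.Mod} (hY : Y ∈ Λ.addCl S) :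
    Λ.Ω^[k] Y ∈ Λ.addCl (Λ.Ω^[k] '' S) := by
  obtain ⟨Z, hZ, hYZ⟩ := hY
  refine ⟨Λ.Ω^[k] Z, ?_, iterate_Ω_mono k hYZ⟩
  rw [← Λ.coe_ΩHom_pow, ← AddMonoidHom.map_mclosure]
  exact AddSubmonoid.mem_map_of_mem _ hZ

lemma addCl_mono {S T : Set Λ.Mod} (h : S ⊆ T) : Λ.addCl S ⊆ Λ.addCl T :=
  fun _ ⟨Z, hZ, hle⟩ => ⟨Z, AddSubmonoid.closure_mono h hZ, hle⟩

lemma findim_mono {A B : Set Λ.Mod} (h : A ⊆ B) : Λ.findim A ≤ Λ.findim B :=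
  sSup_le_sSup (Set.image_mono fun _ ⟨hX, hpd⟩ => ⟨h hX, hpd⟩)

lemma pd_le_findim {A : Set Λ.Mod} {Y : Λ.Mod} (hY : Y ∈ A) (hpd : Λ.pd Y ≠ ⊤) :
    Λ.pd Y ≤ Λ.findim A :=
  le_sSup ⟨Y, ⟨hY, hpd⟩, rfl⟩

lemma pd_le_of_isProj {X : Λ.Mod} {m : ℕ} (h : Λ.IsProj (Λ.Ω^[m] X)) : Λ.pd X ≤ m :=
  sInf_le ⟨m, h, rfl⟩

lemma exists_pd_eq_of_ne_top {X : Λ.Mod} (h : Λ.pd X ≠ ⊤) :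
    ∃ m : ℕ, Λ.pd X = m ∧ Λ.IsProj (Λ.Ω^[m] X) := by
  have hne : {m : ℕ | Λ.IsProj (Λ.Ω^[m] X)}.Nonempty := by
    by_contra hc
    rw [Set.not_nonempty_iff_eq_empty] at hc
    exact h (by simp [pd, hc])
  refine ⟨sInf {m : ℕ | Λ.IsProj (Λ.Ω^[m] X)},
    le_antisymm (pd_le_of_isProj (Nat.sInf_mem hne)) (le_sInf ?_), Nat.sInf_mem hne⟩
  rintro _ ⟨m, hm, rfl⟩
  exact Nat.cast_le.mpr (Nat.sInf_le hm)

lemma pd_le_pd_iterate_Ω_add (k : ℕ) (Y : Λ.Mod) : Λ.pd Y ≤ Λ.pd (Λ.Ω^[k] Y) + k := by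
  by_cases htop : Λ.pd (Λ.Ω^[k] Y) = ⊤
  · simp [htop]
  obtain ⟨m, hm, hproj⟩ := exists_pd_eq_of_ne_top htop
  rw [← Function.iterate_add_apply] at hproj
  rw [hm]
  exact_mod_cast pd_le_of_isProj hproj

lemma pd_le_findim_add_of_iterate_Ω_mem (k : ℕ) {A : Set Λ.Mod} {Y : Λ.Mod}
    (hY : Λ.Ω^[k] Y ∈ A) (hpd : Λ.pd Y ≠ ⊤) : Λ.pd Y ≤ Λ.findim A + k := by
  obtain ⟨m, hm, hproj⟩ := exists_pd_eq_of_ne_top hpd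
  -- `Ω` need not vanish on projectives here, so `pd (Ω^k Y)` is only known finite for `k < pd Y`.
  rcases le_or_gt m k with hmk | hkm
  · rw [hm]
    exact le_trans (Nat.cast_le.mpr hmk) le_add_self
  · have hproj' : Λ.IsProj (Λ.Ω^[m - k] (Λ.Ω^[k] Y)) := by
      rwa [← Function.iterate_add_apply, Nat.sub_add_cancel hkm.le]
    have hfin : Λ.pd (Λ.Ω^[k] Y) ≠ ⊤ :=
      ne_top_of_le_ne_top (ENat.natCast_ne_top _) (pd_le_of_isProj hproj')
    calc Λ.pd Y ≤ Λ.pd (Λ.Ω^[k] Y) + k := pd_le_pd_iterate_Ω_add k Y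
      _ ≤ Λ.findim A + k := by gcongr; exact pd_le_findim hY hfin

lemma findim_addCl_le_findim_addCl_iterate_Ω_add (k : ℕ) (X : Λ.Mod) :
    Λ.findim (Λ.addCl {X}) ≤ Λ.findim (Λ.addCl {Λ.Ω^[k] X}) + k := by
  refine sSup_le ?_
  rintro _ ⟨Y, ⟨hY, hpd⟩, rfl⟩
  refine pd_le_findim_add_of_iterate_Ω_mem k ?_ hpd
  simpa only [Set.image_singleton] using iterate_Ω_mem_addCl k hY

lemma Psi_le_findim_addCl_iterate_Ω_add {X : Λ.Mod} {t : ℕ} (ht : Λ.Phi X ≤ t) :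
    Λ.Psi X ≤ Λ.findim (Λ.addCl {Λ.Ω^[t] X}) + t := by
  obtain ⟨k, rfl⟩ : ∃ k, t = k + Λ.Phi X := ⟨t - Λ.Phi X, (Nat.sub_add_cancel ht).symm⟩
  calc Λ.Psi X = Λ.Phi X + Λ.findim (Λ.addCl {Λ.Ω^[Λ.Phi X] X}) := rfl
    _ ≤ Λ.Phi X + (Λ.findim (Λ.addCl {Λ.Ω^[k] (Λ.Ω^[Λ.Phi X] X)}) + k) := by
      gcongr
      exact findim_addCl_le_findim_addCl_iterate_Ω_add k _
    _ = Λ.findim (Λ.addCl {Λ.Ω^[k + Λ.Phi X] X}) + (k + Λ.Phi X : ℕ) := by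
      rw [Function.iterate_add_apply]
      push_cast
      ring

lemma Phi_le_PhiDim {C : Set Λ.Mod} {X : Λ.Mod} (hX : X ∈ C) : (Λ.Phi X : ℕ∞) ≤ Λ.PhiDim C :=
  le_iSup₂ (f := fun X (_ : X ∈ C) => (Λ.Phi X : ℕ∞)) X hX

end ModData

/-- if `Φ-dim C = n < ∞` and `fin.dim (add Ω^t C) < ∞` for some
`t ≥ n`, then `Ψ-dim C < ∞`; moreover `Ψ-dim C ≤ fin.dim (add Ω^t C) + t`. -/
theorem PsiDim_finite_of_findim_syzygies_finite (Λ : ModData) (C : Set Λ.Mod)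
    (n : ℕ) (hn : Λ.PhiDim C = (n : ℕ∞)) (t : ℕ) (hnt : n ≤ t)
    (hfd : Λ.findim (Λ.addCl (Λ.Ω^[t] '' C)) ≠ ⊤) :
    Λ.PsiDim C ≠ ⊤ ∧ Λ.PsiDim C ≤ Λ.findim (Λ.addCl (Λ.Ω^[t] '' C)) + t := by
  have hle : Λ.PsiDim C ≤ Λ.findim (Λ.addCl (Λ.Ω^[t] '' C)) + t := by
    refine iSup₂_le fun X hX => ?_
    have hPhi : Λ.Phi X ≤ t := by
      have := ModData.Phi_le_PhiDim hX
      rw [hn] at this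
      exact (Nat.cast_le.mp this).trans hnt
    have hsub : Λ.addCl {Λ.Ω^[t] X} ⊆ Λ.addCl (Λ.Ω^[t] '' C) :=
      ModData.addCl_mono (Set.singleton_subset_iff.mpr (Set.mem_image_of_mem _ hX))
    calc Λ.Psi X ≤ Λ.findim (Λ.addCl {Λ.Ω^[t] X}) + t :=
          ModData.Psi_le_findim_addCl_iterate_Ω_add hPhi
      _ ≤ Λ.findim (Λ.addCl (Λ.Ω^[t] '' C)) + t := by gcongr; exact ModData.findim_mono hsub
  exact ⟨ne_top_of_le_ne_top (WithTop.add_ne_top.mpr ⟨hfd, ENat.natCast_ne_top t⟩) hle, hle⟩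
end

section
/- Let Λ be an Artin algebra with fin.dim(Λ) < ∞. Then every subcategory C of mod Λ with finite Φ-dimension also has finite Ψ-dimension. -/
open scoped Classical

/-- over an Artin algebra `Λ` with `fin.dim Λ < ∞`, every
subcategory of `mod Λ` of finite `Φ`-dimension has finite `Ψ`-dimension. -/
theorem PsiDim_finite_of_findim_algebra_finite (Λ : ModData)
    (h : Λ.findim Set.univ ≠ ⊤) (C : Set Λ.Mod) (hC : Λ.PhiDim C ≠ ⊤) :
    Λ.PsiDim C ≠ ⊤ := by
  have hfd : ∀ D : Set Λ.Mod, Λ.findim D ≤ Λ.findim Set.univ := by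
    intro D
    apply sSup_le_sSup
    apply Set.image_mono
    intro X hX
    exact ⟨Set.mem_univ X, hX.2⟩
  have hb : Λ.PsiDim C ≤ Λ.PhiDim C + Λ.findim Set.univ := by
    apply iSup₂_le
    intro X hX
    unfold ModData.Psi
    gcongr
    · exact le_iSup₂ (f := fun X (_ : X ∈ C) => ((Λ.Phi X : ℕ∞))) X hX
    · exact hfd _
  intro h'
  rw [h'] at hb
  exact (WithTop.add_ne_top.mpr ⟨hC, h⟩) (top_le_iff.mp hb)
end

section
/- Let Λ be an Artin algebra, V any finitely generated Λ-module, and D ⊆ mod Λ an additively closed class with Φ-dim(D) < ∞. Then Φ-dim(D ⊕ add V) < ∞. -/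
open scoped Classical

/-!
Write `f = L` and `⟨Y⟩` for the subgroup of `K` spanned by the summands of `Y`. `Φ X` is the
point from which the ranks of `fᵏ⟨X⟩` stop dropping. Once `rk fᵏ⁺¹H = rk fᵏH`, the map `f` is
injective on `fᵏH`, so the ranks of `fᵏ` of every subgroup of `H` have stabilised as well; hence
`Φ (Y ⊕ Z) ≤ n` whenever `Z ∈ add V` and the ranks of `fᵏ(⟨Y⟩ + ⟨V⟩)` are constant from `n` on.

Beyond `m = max (Φ-dim D) (Φ V)` the ranks of `fᵏ⟨Y⟩` (`Y ∈ D`) and of `fᵏ⟨V⟩` are constant,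
so `rk fᵏ(⟨Y⟩ + ⟨V⟩)` drops exactly when `rk (fᵏ⟨Y⟩ ∩ fᵏ⟨V⟩)` grows. This rank is bounded by
`rk ⟨V⟩` and increases both with `k` and with `⟨Y⟩`; as `D` is closed under sums, its maximum,
attained at some `(Y₀, n)`, is also reached by `Y ⊕ Y₀` for every `Y ∈ D`, from `n` on. So `n`
bounds `Φ` on `D ⊕ add V`.
-/

open Module

namespace Submodule

variable {R M N : Type*} [CommRing R] [AddCommGroup M] [Module R M]
  [AddCommGroup N] [Module R N]

theorem finrank_sup_add_finrank_inf_eq_of_finite [IsDomain R] (s t : Submodule R M)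
    [Module.Finite R s] [Module.Finite R t] :
    finrank R ↥(s ⊔ t) + finrank R ↥(s ⊓ t) = finrank R s + finrank R t := by
  have hinf : Module.rank R ↥(s ⊓ t) < Cardinal.aleph0 :=
    (rank_mono inf_le_right).trans_lt (rank_lt_aleph0 R t)
  have := congrArg Cardinal.toNat (rank_sup_add_rank_inf_eq s t)
  rwa [Cardinal.toNat_add (rank_lt_aleph0 R _) hinf,
    Cardinal.toNat_add (rank_lt_aleph0 R s) (rank_lt_aleph0 R t)] at this

theorem finrank_inf_mono_left [Nontrivial R] {p p' : Submodule R M} (q : Submodule R M)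
    [Module.Finite R q] (h : p ≤ p') : finrank R ↥(p ⊓ q) ≤ finrank R ↥(p' ⊓ q) :=
  Cardinal.toNat_le_toNat (rank_mono (inf_le_inf_right q h))
    ((rank_mono inf_le_right).trans_lt (rank_lt_aleph0 R q))

theorem finrank_map_eq_of_disjoint_ker {f : M →ₗ[R] N} {p : Submodule R M}
    (h : Disjoint p (LinearMap.ker f)) : finrank R (p.map f) = finrank R p := by
  rw [← LinearMap.range_domRestrict]
  exact LinearMap.finrank_range_of_inj (LinearMap.injective_domRestrict_iff.mpr h)

theorem map_pow_succ_eq_map_map (f : M →ₗ[R] M) (p : Submodule R M) (k : ℕ) :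
    p.map (f ^ (k + 1)) = (p.map (f ^ k)).map f := by
  rw [pow_succ', Module.End.mul_eq_comp, map_comp]

end Submodule

namespace LinearMap

variable {R M : Type*} [CommRing R] [AddCommGroup M] [Module R M] (f : M →ₗ[R] M)

def RankStableFrom (n : ℕ) (p : Submodule R M) : Prop :=
  ∀ k, n ≤ k → finrank R (p.map (f ^ (k + 1))) = finrank R (p.map (f ^ k))

theorem finrank_map_pow_succ_le [Nontrivial R] (p : Submodule R M) [Module.Finite R p] (k : ℕ) :
    finrank R (p.map (f ^ (k + 1))) ≤ finrank R (p.map (f ^ k)) := by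
  rw [Submodule.map_pow_succ_eq_map_map]
  exact Submodule.finrank_map_le f _

theorem exists_rankStableFrom [Nontrivial R] (p : Submodule R M) [Module.Finite R p] :
    ∃ n, f.RankStableFrom n p := by
  have : Antitone fun k => finrank R (p.map (f ^ k)) :=
    antitone_nat_of_succ_le (f.finrank_map_pow_succ_le p)
  obtain ⟨n, hn⟩ := WellFoundedLT.antitone_chain_condition this
  exact ⟨n, fun k hk => (hn (k + 1) (by omega)).symm.trans (hn k hk)⟩

namespace RankStableFrom

variable {f} {n : ℕ} {p q : Submodule R M}

theorem mono (h : f.RankStableFrom n p) {n' : ℕ} (hn : n ≤ n') : f.RankStableFrom n' p :=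
  fun k hk => h k (hn.trans hk)

theorem finrank_eq (h : f.RankStableFrom n p) {k : ℕ} (hk : n ≤ k) :
    finrank R (p.map (f ^ k)) = finrank R (p.map (f ^ n)) := by
  induction k, hk using Nat.le_induction with
  | base => rfl
  | succ k hk ih => rw [h k hk, ih]

/-- Equal ranks force `f` to be injective on `f^k(q)`, hence on `f^k(p)`. -/
theorem of_le [IsDomain R] [Module.IsTorsionFree R M] [Module.Finite R q]
    (h : f.RankStableFrom n q) (hpq : p ≤ q) : f.RankStableFrom n p := by
  intro k hk
  have hq : Disjoint (q.map (f ^ k)) (ker f) := Submodule.disjoint_ker_of_finrank_le f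
    (by rw [← Submodule.map_pow_succ_eq_map_map, h k hk])
  rw [Submodule.map_pow_succ_eq_map_map]
  exact Submodule.finrank_map_eq_of_disjoint_ker (hq.mono_left (Submodule.map_mono hpq))

variable [IsDomain R] {m : ℕ} {G W : Submodule R M} [Module.Finite R G] [Module.Finite R W]

theorem finrank_map_sup_add_finrank_inf (hG : f.RankStableFrom m G) (hW : f.RankStableFrom m W)
    {k : ℕ} (hk : m ≤ k) :
    finrank R ((G ⊔ W).map (f ^ k)) + finrank R ↥(G.map (f ^ k) ⊓ W.map (f ^ k)) =
      finrank R (G.map (f ^ m)) + finrank R (W.map (f ^ m)) := by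
  rw [Submodule.map_sup, Submodule.finrank_sup_add_finrank_inf_eq_of_finite, hG.finrank_eq hk,
    hW.finrank_eq hk]

theorem finrank_inf_map_pow_mono (hG : f.RankStableFrom m G) (hW : f.RankStableFrom m W)
    {k k' : ℕ} (hk : m ≤ k) (hkk' : k ≤ k') :
    finrank R ↥(G.map (f ^ k) ⊓ W.map (f ^ k)) ≤
      finrank R ↥(G.map (f ^ k') ⊓ W.map (f ^ k')) := by
  have hanti : Antitone fun j => finrank R ((G ⊔ W).map (f ^ j)) :=
    antitone_nat_of_succ_le (f.finrank_map_pow_succ_le _)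
  have hsup : finrank R ((G ⊔ W).map (f ^ k')) ≤ finrank R ((G ⊔ W).map (f ^ k)) := hanti hkk'
  have := finrank_map_sup_add_finrank_inf hG hW hk
  have := finrank_map_sup_add_finrank_inf hG hW (hk.trans hkk')
  omega

theorem sup_of_finrank_inf_le (hG : f.RankStableFrom m G) (hW : f.RankStableFrom m W) {n : ℕ}
    (hn : m ≤ n) (hmax : ∀ k, n ≤ k → finrank R ↥(G.map (f ^ k) ⊓ W.map (f ^ k)) ≤
      finrank R ↥(G.map (f ^ n) ⊓ W.map (f ^ n))) :
    f.RankStableFrom n (G ⊔ W) := by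
  intro k hk
  have := finrank_inf_map_pow_mono hG hW (hn.trans hk) (k.le_add_right 1)
  have := finrank_inf_map_pow_mono hG hW hn hk
  have := hmax (k + 1) (hk.trans (k.le_add_right 1))
  have := finrank_map_sup_add_finrank_inf hG hW (hn.trans hk)
  have := finrank_map_sup_add_finrank_inf hG hW (hn.trans (hk.trans (k.le_add_right 1)))
  omega

end RankStableFrom

theorem exists_rankStableFrom_sup [IsDomain R] [Module.IsTorsionFree R M]
    {𝒢 : Set (Submodule R M)} {W : Submodule R M} [Module.Finite R W] {m : ℕ}
    (h𝒢 : DirectedOn (· ≤ ·) 𝒢) (hfin : ∀ G ∈ 𝒢, Module.Finite R G)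
    (hstab : ∀ G ∈ 𝒢, f.RankStableFrom m G) (hW : f.RankStableFrom m W) :
    ∃ n, ∀ G ∈ 𝒢, f.RankStableFrom n (G ⊔ W) := by
  rcases 𝒢.eq_empty_or_nonempty with rfl | ⟨G₁, hG₁⟩
  · exact ⟨0, by simp⟩
  set S : Set ℕ :=
    {d | ∃ G ∈ 𝒢, ∃ k, m ≤ k ∧ finrank R ↥(G.map (f ^ k) ⊓ W.map (f ^ k)) = d}
  have hbdd : BddAbove S := by
    refine ⟨finrank R W, ?_⟩
    rintro _ ⟨G, -, k, -, rfl⟩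
    exact (Submodule.finrank_mono inf_le_right).trans (Submodule.finrank_map_le _ _)
  obtain ⟨G₀, hG₀, n, hn, hmax⟩ := Nat.sSup_mem (s := S) ⟨_, G₁, hG₁, m, le_rfl, rfl⟩ hbdd
  refine ⟨n, fun G hG => ?_⟩
  obtain ⟨G', hG', hGG', hG₀G'⟩ := h𝒢 G hG G₀ hG₀
  have := hfin G' hG'
  refine (RankStableFrom.sup_of_finrank_inf_le (hstab G' hG') hW hn fun k hk => ?_).of_le
    (sup_le_sup_right hGG' W)
  calc finrank R ↥(G'.map (f ^ k) ⊓ W.map (f ^ k))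
      ≤ sSup S := le_csSup hbdd ⟨G', hG', k, hn.trans hk, rfl⟩
    _ = finrank R ↥(G₀.map (f ^ n) ⊓ W.map (f ^ n)) := hmax.symm
    _ ≤ finrank R ↥(G'.map (f ^ n) ⊓ W.map (f ^ n)) :=
      Submodule.finrank_inf_mono_left _ (Submodule.map_mono hG₀G')

end LinearMap

namespace ModData

variable (Λ : ModData)

instance finite_toIntSubmodule_gen (X : Λ.Mod) :
    Module.Finite ℤ (AddSubgroup.toIntSubmodule (Λ.gen X)) := by
  rw [gen, ← Submodule.span_int_eq_addSubgroupClosure, Submodule.toAddSubgroup_toIntSubmodule]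
  exact Module.Finite.span_of_finite ℤ (X.finite_toSet.image _)

theorem toIntSubmodule_Lpow (k : ℕ) (H : AddSubgroup Λ.K) :
    AddSubgroup.toIntSubmodule (Λ.Lpow k H) =
      (AddSubgroup.toIntSubmodule H).map (Λ.L.toIntLinearMap ^ k) := by
  induction k with
  | zero => simp [Lpow, Module.End.one_eq_id]
  | succ k ih =>
    rw [Lpow, Function.iterate_succ_apply', ← Lpow, ← AddMonoidHom.coe_toIntLinearMap_map, ih,
      Submodule.map_pow_succ_eq_map_map]

theorem rk_Lpow_gen (k : ℕ) (X : Λ.Mod) :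
    Λ.rk (Λ.Lpow k (Λ.gen X)) =
      finrank ℤ ((AddSubgroup.toIntSubmodule (Λ.gen X)).map (Λ.L.toIntLinearMap ^ k)) := by
  rw [rk, toIntSubmodule_Lpow, Module.finrank_eq_rank]

theorem Phi_le_iff {X : Λ.Mod} {n : ℕ} :
    Λ.Phi X ≤ n ↔ Λ.L.toIntLinearMap.RankStableFrom n (AddSubgroup.toIntSubmodule (Λ.gen X)) := by
  have hset : {n | ∀ k, n ≤ k →
      Λ.rk (Λ.Lpow k (Λ.gen X)) = Λ.rk (Λ.Lpow (k + 1) (Λ.gen X))} =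
      {n | Λ.L.toIntLinearMap.RankStableFrom n (AddSubgroup.toIntSubmodule (Λ.gen X))} := by
    ext n
    simp only [Set.mem_ofPred_eq, rk_Lpow_gen, Nat.cast_inj]
    exact forall₂_congr fun k _ => eq_comm
  rw [Phi, hset]
  refine ⟨fun h => LinearMap.RankStableFrom.mono ?_ h, fun h => Nat.sInf_le h⟩
  exact Nat.sInf_mem (LinearMap.exists_rankStableFrom _ _)

theorem gen_add (X Y : Λ.Mod) : Λ.gen (X + Y) = Λ.gen X ⊔ Λ.gen Y := by
  rw [gen, gen, gen, ← AddSubgroup.closure_union, ← Set.image_union]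
  simp only [Multiset.mem_add, Set.ofPred_or]

theorem gen_le_of_mem_addCl_singleton {Z V : Λ.Mod} (h : Z ∈ Λ.addCl {V}) :
    Λ.gen Z ≤ Λ.gen V := by
  obtain ⟨_, hW, hZW⟩ := h
  obtain ⟨n, rfl⟩ := AddSubmonoid.mem_closure_singleton.mp hW
  refine AddSubgroup.closure_mono (Set.image_mono fun i hi => ?_)
  exact (Multiset.mem_nsmul.mp (Multiset.mem_of_le hZW hi)).2

theorem add_mem_of_addCl_eq {D : Set Λ.Mod} (hD : Λ.addCl D = D) {X Y : Λ.Mod} (hX : X ∈ D)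
    (hY : Y ∈ D) : X + Y ∈ D := by
  rw [← hD]
  exact ⟨X + Y, add_mem (AddSubmonoid.subset_closure hX) (AddSubmonoid.subset_closure hY), le_rfl⟩

theorem Phi_le_toNat_PhiDim {C : Set Λ.Mod} (hC : Λ.PhiDim C ≠ ⊤) {X : Λ.Mod} (hX : X ∈ C) :
    Λ.Phi X ≤ (Λ.PhiDim C).toNat := by
  rw [← ENat.natCast_le_natCast, ENat.natCast_toNat hC]
  exact le_iSup₂ (f := fun X _ => (Λ.Phi X : ℕ∞)) X hX

end ModData

/-- for any module `V` and an additively closed class `D` with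
`Φ-dim D < ∞`, one has `Φ-dim (D ⊕ add V) < ∞`. -/
theorem PhiDim_oplus_finite (Λ : ModData) (V : Λ.Mod)
    (D : Set Λ.Mod) (haddD : Λ.addCl D = D) (hD : Λ.PhiDim D ≠ ⊤) :
    Λ.PhiDim (Λ.oplus D (Λ.addCl {V})) ≠ ⊤ := by
  let sub : Λ.Mod → Submodule ℤ Λ.K := fun Y => AddSubgroup.toIntSubmodule (Λ.gen Y)
  have hdir : DirectedOn (· ≤ ·) (sub '' D) := by
    rintro _ ⟨Y, hY, rfl⟩ _ ⟨Y', hY', rfl⟩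
    refine ⟨_, ⟨Y + Y', Λ.add_mem_of_addCl_eq haddD hY hY', rfl⟩, ?_⟩
    simp only [sub, Λ.gen_add, map_sup, le_sup_left, le_sup_right, and_self]
  have hstabD : ∀ G ∈ sub '' D, Λ.L.toIntLinearMap.RankStableFrom
      (max (Λ.PhiDim D).toNat (Λ.Phi V)) G := by
    rintro _ ⟨Y, hY, rfl⟩
    exact Λ.Phi_le_iff.mp ((Λ.Phi_le_toNat_PhiDim hD hY).trans (le_max_left ..))
  obtain ⟨n, hn⟩ := Λ.L.toIntLinearMap.exists_rankStableFrom_sup hdir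
    (by rintro _ ⟨Y, -, rfl⟩; infer_instance) hstabD (Λ.Phi_le_iff.mp (le_max_right ..))
  refine ne_top_of_le_ne_top (ENat.natCast_ne_top n) (iSup₂_le ?_)
  rintro _ ⟨Y, hY, Z, hZ, rfl⟩
  have hgen : Λ.gen (Y + Z) ≤ Λ.gen Y ⊔ Λ.gen V := by
    rw [Λ.gen_add]
    exact sup_le_sup_left (Λ.gen_le_of_mem_addCl_singleton hZ) _
  have hsub : sub (Y + Z) ≤ sub Y ⊔ sub V :=
    (AddSubgroup.toIntSubmodule.monotone hgen).trans (map_sup _ _ _).le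
  exact_mod_cast Λ.Phi_le_iff.mpr ((hn _ ⟨Y, hY, rfl⟩).of_le hsub)
end
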